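/- Let n ≥ 1, d = 2^n, and 0 ≤ Q ≤ 1. Define the environment state |Ω⟩ = (d^{−1/2} Σ_{i∈{0,1}^n} |i⟩⊗|i⟩) ⊗ (√(1−Q)|0⟩ + √Q|1⟩) ∈ ℂ^d ⊗ ℂ^d ⊗ ℂ², and the controlled-swap unitary U on ℂ^d_T ⊗ ℂ^d_{E₁} ⊗ ℂ^d_{E₂} ⊗ ℂ²_{E₃} acting by U(|t⟩⊗|i⟩⊗|j⟩⊗|0⟩) = |t⟩⊗|i⟩⊗|j⟩⊗|0⟩ and U(|t⟩⊗|i⟩⊗|j⟩⊗|1⟩) = |i⟩⊗|t⟩⊗|j⟩⊗|1⟩ on standard basis vectors. Then for every d×d complex matrix ρ on the T factor, the partial trace over the environment factors E₁E₂E₃ of U(ρ ⊗ |Ω⟩⟨Ω|)U† equals the depolarized state (1−Q)ρ + (Q/d)(tr ρ) I_d. -/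

import Mathlib

/-!
Conjugation by the permutation matrix of the controlled swap only relabels the entries of
`ρ ⊗ |Ω⟩⟨Ω|`. On the branch `E₃ = 0` nothing moves, and tracing out the normalized maximally
entangled pair leaves `(1 − Q) ρ`. On the branch `E₃ = 1` the factors `T` and `E₁` are exchanged:
`ρ` is traced out, and the half of the maximally entangled pair that now sits on `T` is the
maximally mixed state, which gives `(Q / d) (tr ρ) I`.
-/

open scoped BigOperators

/-- Environment index: `E₁ × E₂ × E₃ = ℂ^{2^n} ⊗ ℂ^{2^n} ⊗ ℂ²`. -/
abbrev EnvIdx (n : ℕ) := (Fin n → Bool) × (Fin n → Bool) × Bool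

instance envIdxDecEq (n : ℕ) : DecidableEq (EnvIdx n) := instDecidableEqProd

instance fullIdxDecEq (n : ℕ) : DecidableEq ((Fin n → Bool) × EnvIdx n) :=
  instDecidableEqProd

/-- The environment state
`|Ω⟩ = (d^{−1/2} Σ_i |i⟩⊗|i⟩) ⊗ (√(1−Q)|0⟩ + √Q|1⟩)`, `d = 2^n`, as a coordinate
function on `ℂ^d ⊗ ℂ^d ⊗ ℂ²`. -/
noncomputable def envState (n : ℕ) (Q : ℝ) : EnvIdx n → ℂ :=
  fun e => (if e.1 = e.2.1 then ((Real.sqrt (2 ^ n) : ℝ) : ℂ)⁻¹ else 0) *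
    (if e.2.2 then ((Real.sqrt Q : ℝ) : ℂ) else ((Real.sqrt (1 - Q) : ℝ) : ℂ))

/-- The controlled-swap unitary `U` on `ℂ^d_T ⊗ ℂ^d_{E₁} ⊗ ℂ^d_{E₂} ⊗ ℂ²_{E₃}`:
`U(|t⟩|i⟩|j⟩|0⟩) = |t⟩|i⟩|j⟩|0⟩` and `U(|t⟩|i⟩|j⟩|1⟩) = |i⟩|t⟩|j⟩|1⟩`. -/
def cswapU (n : ℕ) :
    Matrix ((Fin n → Bool) × EnvIdx n) ((Fin n → Bool) × EnvIdx n) ℂ :=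
  Matrix.of fun p q =>
    if p.2.2.2 = q.2.2.2 ∧ p.2.2.1 = q.2.2.1 ∧
        ((q.2.2.2 = false ∧ p.1 = q.1 ∧ p.2.1 = q.2.1) ∨
         (q.2.2.2 = true ∧ p.1 = q.2.1 ∧ p.2.1 = q.1))
    then 1 else 0

/-- `ρ ⊗ |Ω⟩⟨Ω|` on the product space `T × E₁E₂E₃`. -/
noncomputable def rhoTensorOmega (n : ℕ) (Q : ℝ)
    (ρ : Matrix (Fin n → Bool) (Fin n → Bool) ℂ) :
    Matrix ((Fin n → Bool) × EnvIdx n) ((Fin n → Bool) × EnvIdx n) ℂ :=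
  Matrix.of fun p q => ρ p.1 q.1 * (envState n Q p.2 * star (envState n Q q.2))

/-- Partial trace over the environment factors. -/
noncomputable def ptraceEnv (n : ℕ)
    (M : Matrix ((Fin n → Bool) × EnvIdx n) ((Fin n → Bool) × EnvIdx n) ℂ) :
    Matrix (Fin n → Bool) (Fin n → Bool) ℂ :=
  Matrix.of fun t t' => ∑ e : EnvIdx n, M (t, e) (t', e)

namespace Matrix

theorem permMatrix_mul_mul_conjTranspose_permMatrix {m R : Type*} [Fintype m] [DecidableEq m]
    [NonAssocSemiring R] [StarRing R] (σ : Equiv.Perm m) (M : Matrix m m R) :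
    σ.permMatrix R * M * (σ.permMatrix R)ᴴ = M.submatrix σ σ := by
  rw [conjTranspose_permMatrix, PEquiv.toMatrix_toPEquiv_mul, PEquiv.mul_toMatrix_toPEquiv]
  rfl

end Matrix

def cswapPerm (n : ℕ) : Equiv.Perm ((Fin n → Bool) × EnvIdx n) :=
  Function.Involutive.toPerm (fun p => if p.2.2.2 then (p.2.1, p.1, p.2.2.1, true) else p)
    (by rintro ⟨t, i, j, _ | _⟩ <;> rfl)

@[simp]
theorem cswapPerm_apply_false (n : ℕ) (t i j : Fin n → Bool) :
    cswapPerm n (t, i, j, false) = (t, i, j, false) := rfl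

@[simp]
theorem cswapPerm_apply_true (n : ℕ) (t i j : Fin n → Bool) :
    cswapPerm n (t, i, j, true) = (i, t, j, true) := rfl

theorem cswapU_eq_permMatrix (n : ℕ) : cswapU n = (cswapPerm n).permMatrix ℂ := by
  ext ⟨t, i, j, b⟩ ⟨t', i', j', b'⟩
  cases b <;> cases b' <;> simp [cswapU, and_comm, and_left_comm, and_assoc]

section envState

variable {n : ℕ} {Q : ℝ}

theorem envState_mul_star (hQ0 : 0 ≤ Q) (hQ1 : Q ≤ 1) (i j i' j' : Fin n → Bool) (b : Bool) :
    envState n Q (i, j, b) * star (envState n Q (i', j', b)) =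
      if i = j ∧ i' = j' then (((if b then Q else 1 - Q) / 2 ^ n : ℝ) : ℂ) else 0 := by
  set w : ℝ := if b then Q else 1 - Q
  have hΩ : ∀ i j, envState n Q (i, j, b) =
      ((if i = j then (√(2 ^ n))⁻¹ * √w else 0 : ℝ) : ℂ) := by
    intro i j
    unfold envState w
    cases b <;> split_ifs <;> simp
  rw [hΩ, hΩ, Complex.star_def, Complex.conj_ofReal, ← Complex.ofReal_mul]
  by_cases h : i = j ∧ i' = j'
  · rw [if_pos h, if_pos h.1, if_pos h.2]
    congr 1
    field_simp
    rw [Real.sq_sqrt (by unfold w; split_ifs <;> linarith), Real.sq_sqrt (by positivity)]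
  · rcases not_and_or.mp h with h | h <;> simp [h]

theorem sum_envState_mul_star_false (hQ0 : 0 ≤ Q) (hQ1 : Q ≤ 1) :
    ∑ i, ∑ j, envState n Q (i, j, false) * star (envState n Q (i, j, false)) =
      ((1 - Q : ℝ) : ℂ) := by
  simp only [envState_mul_star hQ0 hQ1, and_self, Bool.false_eq_true, if_false,
    Finset.sum_ite_eq, Finset.mem_univ, if_true, Finset.sum_const, Finset.card_univ,
    Fintype.card_fun, Fintype.card_bool, Fintype.card_fin, nsmul_eq_mul]
  push_cast
  field_simp

theorem sum_envState_mul_star_true (hQ0 : 0 ≤ Q) (hQ1 : Q ≤ 1) (t t' : Fin n → Bool) :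
    ∑ j, envState n Q (t, j, true) * star (envState n Q (t', j, true)) =
      if t = t' then ((Q / 2 ^ n : ℝ) : ℂ) else 0 := by
  simp only [envState_mul_star hQ0 hQ1, if_true]
  split_ifs with htt
  · simp [htt]
  · exact Finset.sum_eq_zero fun j _ => if_neg fun h => htt (h.1.trans h.2.symm)

end envState

theorem depol_dilation_general (n : ℕ) (Q : ℝ) (hQ0 : 0 ≤ Q) (hQ1 : Q ≤ 1)
    (ρ : Matrix (Fin n → Bool) (Fin n → Bool) ℂ) :
    ptraceEnv n (cswapU n * rhoTensorOmega n Q ρ * (cswapU n).conjTranspose) =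
      ((1 - Q : ℝ) : ℂ) • ρ +
        ((Q / 2 ^ n : ℝ) : ℂ) • ρ.trace • (1 : Matrix (Fin n → Bool) (Fin n → Bool) ℂ) := by
  ext t t'
  rw [cswapU_eq_permMatrix, Matrix.permMatrix_mul_mul_conjTranspose_permMatrix]
  simp only [ptraceEnv, rhoTensorOmega, Matrix.of_apply, Matrix.submatrix_apply,
    Fintype.sum_prod_type, Fintype.sum_bool, Finset.sum_add_distrib, cswapPerm_apply_false,
    cswapPerm_apply_true, ← Finset.mul_sum, ← Finset.sum_mul,
    sum_envState_mul_star_false hQ0 hQ1, sum_envState_mul_star_true hQ0 hQ1]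
  simp only [Matrix.add_apply, Matrix.smul_apply, Matrix.one_apply, Matrix.trace,
    Matrix.diag_apply, smul_eq_mul, mul_ite, mul_one, mul_zero]
  split_ifs <;> ring

/-- Stinespring dilation of the depolarizing channel: tracing out the environment
from `U(ρ ⊗ |Ω⟩⟨Ω|)U†` yields `(1−Q)ρ + (Q/d)(tr ρ) I_d`, `d = 2^n`. -/
theorem depol_dilation (n : ℕ) (hn : 1 ≤ n) (Q : ℝ) (hQ0 : 0 ≤ Q) (hQ1 : Q ≤ 1)
    (ρ : Matrix (Fin n → Bool) (Fin n → Bool) ℂ) :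
    ptraceEnv n (cswapU n * rhoTensorOmega n Q ρ * (cswapU n).conjTranspose) =
      ((1 - Q : ℝ) : ℂ) • ρ +
        ((Q / 2 ^ n : ℝ) : ℂ) • ρ.trace • (1 : Matrix (Fin n → Bool) (Fin n → Bool) ℂ) :=
  depol_dilation_general n Q hQ0 hQ1 ρ
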